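/- Theorema Egregium (first fundamental form version for a parametrized surface): if two smooth immersed surface patches r, r̃ : U → ℝ³ induce the same first fundamental form coefficients E, F, G on U, then their Gaussian curvatures agree at every point of U. -/

import Mathlib

open scoped BigOperators

noncomputable section

/-- Euclidean dot product on `ℝ³`. -/
def dot3 (u v : Fin 3 → ℝ) : ℝ := ∑ i, u i * v i

/-- Cross product on `ℝ³`. -/
def cross3 (u v : Fin 3 → ℝ) : Fin 3 → ℝ :=
  ![u 1 * v 2 - u 2 * v 1, u 2 * v 0 - u 0 * v 2, u 0 * v 1 - u 1 * v 0]

/-- Partial derivative in the first (`u`) variable. -/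
def pdu {E : Type*} [NormedAddCommGroup E] [NormedSpace ℝ E]
    (f : ℝ × ℝ → E) (p : ℝ × ℝ) : E := fderiv ℝ f p (1, 0)

/-- Partial derivative in the second (`v`) variable. -/
def pdv {E : Type*} [NormedAddCommGroup E] [NormedSpace ℝ E]
    (f : ℝ × ℝ → E) (p : ℝ × ℝ) : E := fderiv ℝ f p (0, 1)

/-- First fundamental form coefficients `E`, `F`, `G` of a surface patch. -/
def coefE (r : ℝ × ℝ → Fin 3 → ℝ) (p : ℝ × ℝ) : ℝ := dot3 (pdu r p) (pdu r p)
def coefF (r : ℝ × ℝ → Fin 3 → ℝ) (p : ℝ × ℝ) : ℝ := dot3 (pdu r p) (pdv r p)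
def coefG (r : ℝ × ℝ → Fin 3 → ℝ) (p : ℝ × ℝ) : ℝ := dot3 (pdv r p) (pdv r p)

/-- Unit normal of a surface patch. -/
def unitNormal (r : ℝ × ℝ → Fin 3 → ℝ) (p : ℝ × ℝ) : Fin 3 → ℝ :=
  (Real.sqrt (dot3 (cross3 (pdu r p) (pdv r p)) (cross3 (pdu r p) (pdv r p))))⁻¹ •
    cross3 (pdu r p) (pdv r p)

/-- Second fundamental form coefficients `L`, `M`, `N` of a surface patch. -/
def coefL (r : ℝ × ℝ → Fin 3 → ℝ) (p : ℝ × ℝ) : ℝ := dot3 (pdu (pdu r) p) (unitNormal r p)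
def coefM (r : ℝ × ℝ → Fin 3 → ℝ) (p : ℝ × ℝ) : ℝ := dot3 (pdv (pdu r) p) (unitNormal r p)
def coefN (r : ℝ × ℝ → Fin 3 → ℝ) (p : ℝ × ℝ) : ℝ := dot3 (pdv (pdv r) p) (unitNormal r p)

/-- Gaussian curvature `K = (LN - M²)/(EG - F²)` of a surface patch. -/
def gaussK (r : ℝ × ℝ → Fin 3 → ℝ) (p : ℝ × ℝ) : ℝ :=
  (coefL r p * coefN r p - coefM r p ^ 2) / (coefE r p * coefG r p - coefF r p ^ 2)

/-! ### Auxiliary lemmas -/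

section DiffAux

variable {E : Type*} [NormedAddCommGroup E] [NormedSpace ℝ E]

lemma contDiff_pd (f : ℝ × ℝ → E) (hf : ContDiff ℝ (⊤ : ℕ∞) f) (w : ℝ × ℝ) :
    ContDiff ℝ (⊤ : ℕ∞) (fun p => fderiv ℝ f p w) :=
  (hf.fderiv_right (by simp)).clm_apply contDiff_const

lemma contDiff_pdu (f : ℝ × ℝ → E) (hf : ContDiff ℝ (⊤ : ℕ∞) f) : ContDiff ℝ (⊤ : ℕ∞) (pdu f) :=
  contDiff_pd f hf _

lemma contDiff_pdv (f : ℝ × ℝ → E) (hf : ContDiff ℝ (⊤ : ℕ∞) f) : ContDiff ℝ (⊤ : ℕ∞) (pdv f) :=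
  contDiff_pd f hf _

/-- Clairaut's theorem. -/
lemma pd_comm (f : ℝ × ℝ → E) (hf : ContDiff ℝ (⊤ : ℕ∞) f) (p : ℝ × ℝ) :
    pdu (pdv f) p = pdv (pdu f) p := by
  have hsymm : IsSymmSndFDerivAt ℝ f p := (hf.contDiffAt).isSymmSndFDerivAt (by rw [minSmoothness_of_isRCLikeNormedField]; exact WithTop.coe_le_coe.2 le_top)
  have hd : DifferentiableAt ℝ (fderiv ℝ f) p :=
    ((hf.fderiv_right (m := 1) (WithTop.coe_le_coe.2 le_top)).differentiable one_ne_zero).differentiableAt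
  have key : ∀ w v : ℝ × ℝ, fderiv ℝ (fun q => fderiv ℝ f q w) p v
      = fderiv ℝ (fderiv ℝ f) p v w := by
    intro w v
    have : HasFDerivAt (fun q => fderiv ℝ f q w)
        ((ContinuousLinearMap.apply ℝ E w).comp (fderiv ℝ (fderiv ℝ f) p)) p :=
      (ContinuousLinearMap.apply ℝ E w).hasFDerivAt.comp p hd.hasFDerivAt
    rw [this.fderiv]; rfl
  show fderiv ℝ (fun q => fderiv ℝ f q (0,1)) p (1,0)
      = fderiv ℝ (fun q => fderiv ℝ f q (1,0)) p (0,1)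
  rw [key, key, hsymm]

/-- Derivatives coincide at points of an open set on which the functions coincide. -/
lemma pd_congr_of_eqOn {U : Set (ℝ × ℝ)} (hU : IsOpen U) {f g : ℝ × ℝ → E}
    (h : ∀ q ∈ U, f q = g q) {p : ℝ × ℝ} (hp : p ∈ U) (w : ℝ × ℝ) :
    fderiv ℝ f p w = fderiv ℝ g p w := by
  have : f =ᶠ[nhds p] g := Filter.eventually_iff_exists_mem.2 ⟨U, hU.mem_nhds hp, h⟩
  rw [this.fderiv_eq]

end DiffAux

lemma hasFDerivAt_dot3 (g h : ℝ × ℝ → Fin 3 → ℝ) (p : ℝ × ℝ)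
    (hg : DifferentiableAt ℝ g p) (hh : DifferentiableAt ℝ h p) :
    HasFDerivAt (fun q => dot3 (g q) (h q))
      (∑ i : Fin 3, (g p i • ((ContinuousLinearMap.proj (R := ℝ) (φ := fun _ : Fin 3 => ℝ) i).comp (fderiv ℝ h p)) +
        h p i • ((ContinuousLinearMap.proj (R := ℝ) (φ := fun _ : Fin 3 => ℝ) i).comp (fderiv ℝ g p)))) p := by
  have Hg : ∀ i : Fin 3, HasFDerivAt (fun q => g q i)
      ((ContinuousLinearMap.proj (R := ℝ) (φ := fun _ : Fin 3 => ℝ) i).comp (fderiv ℝ g p)) p :=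
    fun i => (ContinuousLinearMap.proj (R := ℝ) (φ := fun _ : Fin 3 => ℝ) i).hasFDerivAt.comp p hg.hasFDerivAt
  have Hh : ∀ i : Fin 3, HasFDerivAt (fun q => h q i)
      ((ContinuousLinearMap.proj (R := ℝ) (φ := fun _ : Fin 3 => ℝ) i).comp (fderiv ℝ h p)) p :=
    fun i => (ContinuousLinearMap.proj (R := ℝ) (φ := fun _ : Fin 3 => ℝ) i).hasFDerivAt.comp p hh.hasFDerivAt
  have Hi : ∀ i : Fin 3, HasFDerivAt (fun q => g q i * h q i)
      (g p i • ((ContinuousLinearMap.proj (R := ℝ) (φ := fun _ : Fin 3 => ℝ) i).comp (fderiv ℝ h p)) +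
        h p i • ((ContinuousLinearMap.proj (R := ℝ) (φ := fun _ : Fin 3 => ℝ) i).comp (fderiv ℝ g p))) p :=
    fun i => (Hg i).mul (Hh i)
  have := HasFDerivAt.fun_sum (fun i (_ : i ∈ Finset.univ) => Hi i)
  simpa [dot3] using this

lemma pd_dot3 (g h : ℝ × ℝ → Fin 3 → ℝ) (p : ℝ × ℝ) (w : ℝ × ℝ)
    (hg : DifferentiableAt ℝ g p) (hh : DifferentiableAt ℝ h p) :
    fderiv ℝ (fun q => dot3 (g q) (h q)) p w
      = dot3 (fderiv ℝ g p w) (h p) + dot3 (g p) (fderiv ℝ h p w) := by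
  rw [(hasFDerivAt_dot3 g h p hg hh).fderiv]
  simp [dot3, Fin.sum_univ_three]
  ring

lemma diffAt_dot3 (g h : ℝ × ℝ → Fin 3 → ℝ) (p : ℝ × ℝ)
    (hg : DifferentiableAt ℝ g p) (hh : DifferentiableAt ℝ h p) :
    DifferentiableAt ℝ (fun q => dot3 (g q) (h q)) p :=
  (hasFDerivAt_dot3 g h p hg hh).differentiableAt

lemma dot3_comm (u v : Fin 3 → ℝ) : dot3 u v = dot3 v u := by
  simp [dot3, Fin.sum_univ_three]; ring

/-! ### Derivatives of the first fundamental form coefficients -/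

section FFF

variable (r : ℝ × ℝ → Fin 3 → ℝ)

lemma coefE_pd (hr : ContDiff ℝ (⊤ : ℕ∞) r) (q w : ℝ × ℝ) :
    fderiv ℝ (coefE r) q w = 2 * dot3 (fderiv ℝ (pdu r) q w) (pdu r q) := by
  have d1 : DifferentiableAt ℝ (pdu r) q :=
    ((contDiff_pdu r hr).differentiable (by simp)).differentiableAt
  have : coefE r = fun q => dot3 (pdu r q) (pdu r q) := rfl
  rw [this, pd_dot3 _ _ q w d1 d1, dot3_comm (pdu r q)]
  ring

lemma coefF_pd (hr : ContDiff ℝ (⊤ : ℕ∞) r) (q w : ℝ × ℝ) :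
    fderiv ℝ (coefF r) q w = dot3 (fderiv ℝ (pdu r) q w) (pdv r q)
      + dot3 (pdu r q) (fderiv ℝ (pdv r) q w) := by
  have d1 : DifferentiableAt ℝ (pdu r) q :=
    ((contDiff_pdu r hr).differentiable (by simp)).differentiableAt
  have d2 : DifferentiableAt ℝ (pdv r) q :=
    ((contDiff_pdv r hr).differentiable (by simp)).differentiableAt
  have : coefF r = fun q => dot3 (pdu r q) (pdv r q) := rfl
  rw [this, pd_dot3 _ _ q w d1 d2]

lemma coefG_pd (hr : ContDiff ℝ (⊤ : ℕ∞) r) (q w : ℝ × ℝ) :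
    fderiv ℝ (coefG r) q w = 2 * dot3 (fderiv ℝ (pdv r) q w) (pdv r q) := by
  have d2 : DifferentiableAt ℝ (pdv r) q :=
    ((contDiff_pdv r hr).differentiable (by simp)).differentiableAt
  have : coefG r = fun q => dot3 (pdv r q) (pdv r q) := rfl
  rw [this, pd_dot3 _ _ q w d2 d2, dot3_comm (pdv r q)]
  ring

lemma coefE_pdu (hr : ContDiff ℝ (⊤ : ℕ∞) r) (q : ℝ × ℝ) :
    pdu (coefE r) q = 2 * dot3 (pdu (pdu r) q) (pdu r q) := coefE_pd r hr q _

lemma coefE_pdv (hr : ContDiff ℝ (⊤ : ℕ∞) r) (q : ℝ × ℝ) :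
    pdv (coefE r) q = 2 * dot3 (pdv (pdu r) q) (pdu r q) := coefE_pd r hr q _

lemma coefF_pdu (hr : ContDiff ℝ (⊤ : ℕ∞) r) (q : ℝ × ℝ) :
    pdu (coefF r) q = dot3 (pdu (pdu r) q) (pdv r q) + dot3 (pdu r q) (pdv (pdu r) q) := by
  rw [show pdv (pdu r) q = pdu (pdv r) q from (pd_comm r hr q).symm]
  exact coefF_pd r hr q _

lemma coefF_pdv (hr : ContDiff ℝ (⊤ : ℕ∞) r) (q : ℝ × ℝ) :
    pdv (coefF r) q = dot3 (pdv (pdu r) q) (pdv r q) + dot3 (pdu r q) (pdv (pdv r) q) :=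
  coefF_pd r hr q _

lemma coefG_pdu (hr : ContDiff ℝ (⊤ : ℕ∞) r) (q : ℝ × ℝ) :
    pdu (coefG r) q = 2 * dot3 (pdv (pdu r) q) (pdv r q) := by
  rw [show pdv (pdu r) q = pdu (pdv r) q from (pd_comm r hr q).symm]
  exact coefG_pd r hr q _

lemma coefG_pdv (hr : ContDiff ℝ (⊤ : ℕ∞) r) (q : ℝ × ℝ) :
    pdv (coefG r) q = 2 * dot3 (pdv (pdv r) q) (pdv r q) := coefG_pd r hr q _

/-- The Brioschi combination of second derivatives of `E, F, G`. -/
lemma brioschi_combo (hr : ContDiff ℝ (⊤ : ℕ∞) r) (p : ℝ × ℝ) :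
    -(1/2) * pdv (pdv (coefE r)) p + pdu (pdv (coefF r)) p - (1/2) * pdu (pdu (coefG r)) p
      = dot3 (pdu (pdu r) p) (pdv (pdv r) p) - dot3 (pdv (pdu r) p) (pdv (pdu r) p) := by
  have hru : ContDiff ℝ (⊤ : ℕ∞) (pdu r) := contDiff_pdu r hr
  have hrv : ContDiff ℝ (⊤ : ℕ∞) (pdv r) := contDiff_pdv r hr
  have hruu : DifferentiableAt ℝ (pdu (pdu r)) p :=
    ((contDiff_pdu _ hru).differentiable (by simp)).differentiableAt
  have hruv : DifferentiableAt ℝ (pdv (pdu r)) p :=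
    ((contDiff_pdv _ hru).differentiable (by simp)).differentiableAt
  have hrvv : DifferentiableAt ℝ (pdv (pdv r)) p :=
    ((contDiff_pdv _ hrv).differentiable (by simp)).differentiableAt
  have hdu : ∀ q, DifferentiableAt ℝ (pdu r) q :=
    fun q => (hru.differentiable (by simp)).differentiableAt
  have hdv : ∀ q, DifferentiableAt ℝ (pdv r) q :=
    fun q => (hrv.differentiable (by simp)).differentiableAt
  -- third order symmetry: pdu (pdv (pdv r)) p = pdv (pdv (pdu r)) p
  have hswap : pdu (pdv r) = pdv (pdu r) := funext fun q => pd_comm r hr q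
  have h3 : pdu (pdv (pdv r)) p = pdv (pdv (pdu r)) p := by
    rw [pd_comm (pdv r) hrv p, hswap]
  -- compute Evv
  have hEvv : pdv (pdv (coefE r)) p
      = 2 * (dot3 (pdv (pdv (pdu r)) p) (pdu r p)
          + dot3 (pdv (pdu r) p) (pdv (pdu r) p)) := by
    have h1 : pdv (coefE r) = fun q => 2 * dot3 (pdv (pdu r) q) (pdu r q) :=
      funext fun q => coefE_pdv r hr q
    show fderiv ℝ (pdv (coefE r)) p (0,1) = _
    rw [h1]
    have hd : DifferentiableAt ℝ (fun q => dot3 (pdv (pdu r) q) (pdu r q)) p :=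
      diffAt_dot3 _ _ p hruv (hdu p)
    rw [fderiv_const_mul hd 2]
    have := pd_dot3 (pdv (pdu r)) (pdu r) p (0,1) hruv (hdu p)
    simp only [ContinuousLinearMap.coe_smul', Pi.smul_apply, smul_eq_mul]
    rw [this]
    show 2 * (dot3 (pdv (pdv (pdu r)) p) (pdu r p) + dot3 (pdv (pdu r) p) (pdv (pdu r) p)) = _
    ring
  -- compute Guu
  have hGuu : pdu (pdu (coefG r)) p
      = 2 * (dot3 (pdu (pdv (pdu r)) p) (pdv r p)
          + dot3 (pdv (pdu r) p) (pdv (pdu r) p)) := by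
    have h1 : pdu (coefG r) = fun q => 2 * dot3 (pdv (pdu r) q) (pdv r q) :=
      funext fun q => coefG_pdu r hr q
    show fderiv ℝ (pdu (coefG r)) p (1,0) = _
    rw [h1]
    have hd : DifferentiableAt ℝ (fun q => dot3 (pdv (pdu r) q) (pdv r q)) p :=
      diffAt_dot3 _ _ p hruv (hdv p)
    rw [fderiv_const_mul hd 2]
    have := pd_dot3 (pdv (pdu r)) (pdv r) p (1,0) hruv (hdv p)
    simp only [ContinuousLinearMap.coe_smul', Pi.smul_apply, smul_eq_mul]
    rw [this]
    show 2 * (dot3 (pdu (pdv (pdu r)) p) (pdv r p) + dot3 (pdv (pdu r) p) (pdu (pdv r) p)) = _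
    rw [show pdu (pdv r) p = pdv (pdu r) p from pd_comm r hr p]
  -- compute Fvu
  have hFvu : pdu (pdv (coefF r)) p
      = dot3 (pdu (pdv (pdu r)) p) (pdv r p) + dot3 (pdv (pdu r) p) (pdv (pdu r) p)
        + dot3 (pdu (pdu r) p) (pdv (pdv r) p) + dot3 (pdu r p) (pdu (pdv (pdv r)) p) := by
    have h1 : pdv (coefF r)
        = fun q => dot3 (pdv (pdu r) q) (pdv r q) + dot3 (pdu r q) (pdv (pdv r) q) :=
      funext fun q => coefF_pdv r hr q
    show fderiv ℝ (pdv (coefF r)) p (1,0) = _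
    rw [h1]
    have hd1 : DifferentiableAt ℝ (fun q => dot3 (pdv (pdu r) q) (pdv r q)) p :=
      diffAt_dot3 _ _ p hruv (hdv p)
    have hd2 : DifferentiableAt ℝ (fun q => dot3 (pdu r q) (pdv (pdv r) q)) p :=
      diffAt_dot3 _ _ p (hdu p) hrvv
    rw [fderiv_fun_add hd1 hd2]
    simp only [ContinuousLinearMap.add_apply]
    rw [pd_dot3 (pdv (pdu r)) (pdv r) p (1,0) hruv (hdv p),
      pd_dot3 (pdu r) (pdv (pdv r)) p (1,0) (hdu p) hrvv]
    show dot3 (pdu (pdv (pdu r)) p) (pdv r p) + dot3 (pdv (pdu r) p) (pdu (pdv r) p)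
        + (dot3 (pdu (pdu r) p) (pdv (pdv r) p) + dot3 (pdu r p) (pdu (pdv (pdv r)) p)) = _
    rw [show pdu (pdv r) p = pdv (pdu r) p from pd_comm r hr p]
    ring
  rw [hEvv, hGuu, hFvu, h3, dot3_comm (pdu r p) (pdv (pdv (pdu r)) p)]
  ring

end FFF

/-! ### Algebraic identities -/

lemma dot3_cross_self (x y : Fin 3 → ℝ) :
    dot3 (cross3 x y) (cross3 x y) = dot3 x x * dot3 y y - dot3 x y ^ 2 := by
  simp [dot3, cross3, Fin.sum_univ_three]; ring

lemma dot3_self_nonneg (u : Fin 3 → ℝ) : 0 ≤ dot3 u u := by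
  simp only [dot3, Fin.sum_univ_three]
  nlinarith [sq_nonneg (u 0), sq_nonneg (u 1), sq_nonneg (u 2)]

lemma dot3_self_pos (u : Fin 3 → ℝ) (hu : u ≠ 0) : 0 < dot3 u u := by
  rcases (dot3_self_nonneg u).lt_or_eq with h | h
  · exact h
  · exfalso
    apply hu
    have h0 : u 0 * u 0 + u 1 * u 1 + u 2 * u 2 = 0 := by
      simpa [dot3, Fin.sum_univ_three] using h.symm
    have h00 : u 0 = 0 := by nlinarith [sq_nonneg (u 0), sq_nonneg (u 1), sq_nonneg (u 2)]
    have h11 : u 1 = 0 := by nlinarith [sq_nonneg (u 0), sq_nonneg (u 1), sq_nonneg (u 2)]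
    have h22 : u 2 = 0 := by nlinarith [sq_nonneg (u 0), sq_nonneg (u 1), sq_nonneg (u 2)]
    funext i
    fin_cases i <;> simp [h00, h11, h22]

lemma dot3_smul_right (s : ℝ) (u w : Fin 3 → ℝ) : dot3 u (s • w) = s * dot3 u w := by
  simp [dot3, Fin.sum_univ_three]; ring

/-- The key determinant identity. -/
lemma key_det_identity (a b c x y : Fin 3 → ℝ) :
    dot3 a (cross3 x y) * dot3 c (cross3 x y) - dot3 b (cross3 x y) ^ 2
      = (dot3 a c - dot3 b b) * (dot3 x x * dot3 y y - dot3 x y ^ 2)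
        - dot3 a x * (dot3 c x * dot3 y y - dot3 c y * dot3 x y)
        + dot3 a y * (dot3 c x * dot3 x y - dot3 c y * dot3 x x)
        + dot3 b x * (dot3 b x * dot3 y y - dot3 b y * dot3 x y)
        - dot3 b y * (dot3 b x * dot3 x y - dot3 b y * dot3 x x) := by
  simp [dot3, cross3, Fin.sum_univ_three]; ring

/-! ### The Brioschi formula -/

/-- Intrinsic (Brioschi-type) expression for the Gaussian curvature. -/
def egr (Ef Ff Gf : ℝ × ℝ → ℝ) (p : ℝ × ℝ) : ℝ :=
  ((-(1/2) * pdv (pdv Ef) p + pdu (pdv Ff) p - (1/2) * pdu (pdu Gf) p)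
      * (Ef p * Gf p - Ff p ^ 2)
    - (1/2 * pdu Ef p) * ((pdv Ff p - 1/2 * pdu Gf p) * Gf p - (1/2 * pdv Gf p) * Ff p)
    + (pdu Ff p - 1/2 * pdv Ef p) * ((pdv Ff p - 1/2 * pdu Gf p) * Ff p
        - (1/2 * pdv Gf p) * Ef p)
    + (1/2 * pdv Ef p) * ((1/2 * pdv Ef p) * Gf p - (1/2 * pdu Gf p) * Ff p)
    - (1/2 * pdu Gf p) * ((1/2 * pdv Ef p) * Ff p - (1/2 * pdu Gf p) * Ef p))
    / (Ef p * Gf p - Ff p ^ 2) ^ 2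

lemma gaussK_eq_egr (r : ℝ × ℝ → Fin 3 → ℝ) (hr : ContDiff ℝ (⊤ : ℕ∞) r) (p : ℝ × ℝ)
    (himm : cross3 (pdu r p) (pdv r p) ≠ 0) :
    gaussK r p = egr (coefE r) (coefF r) (coefG r) p := by
  set x := pdu r p
  set y := pdv r p
  set a := pdu (pdu r) p
  set b := pdv (pdu r) p
  set c := pdv (pdv r) p
  set w := cross3 x y with hw
  have hW : dot3 w w = coefE r p * coefG r p - coefF r p ^ 2 := by
    rw [hw, dot3_cross_self]; rfl
  have hWpos : 0 < dot3 w w := dot3_self_pos w himm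
  have hsq : Real.sqrt (dot3 w w) * Real.sqrt (dot3 w w) = dot3 w w :=
    Real.mul_self_sqrt hWpos.le
  have hsqpos : 0 < Real.sqrt (dot3 w w) := Real.sqrt_pos.2 hWpos
  have hL : coefL r p = (Real.sqrt (dot3 w w))⁻¹ * dot3 a w := by
    unfold coefL unitNormal; rw [dot3_smul_right]
  have hM : coefM r p = (Real.sqrt (dot3 w w))⁻¹ * dot3 b w := by
    unfold coefM unitNormal; rw [dot3_smul_right]
  have hN : coefN r p = (Real.sqrt (dot3 w w))⁻¹ * dot3 c w := by
    unfold coefN unitNormal; rw [dot3_smul_right]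
  have hnum : coefL r p * coefN r p - coefM r p ^ 2
      = (dot3 a w * dot3 c w - dot3 b w ^ 2) / dot3 w w := by
    rw [hL, hM, hN]
    field_simp
    rw [Real.sq_sqrt hWpos.le]; ring
  -- dot products with first derivatives in terms of derivatives of E,F,G
  have hax : dot3 a x = 1/2 * pdu (coefE r) p := by
    rw [coefE_pdu r hr p]; ring
  have hbx : dot3 b x = 1/2 * pdv (coefE r) p := by
    rw [coefE_pdv r hr p]; ring
  have hby : dot3 b y = 1/2 * pdu (coefG r) p := by
    rw [coefG_pdu r hr p]; ring
  have hcy : dot3 c y = 1/2 * pdv (coefG r) p := by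
    rw [coefG_pdv r hr p]; ring
  have hay : dot3 a y = pdu (coefF r) p - 1/2 * pdv (coefE r) p := by
    rw [coefF_pdu r hr p, coefE_pdv r hr p, dot3_comm x b]; ring
  have hcx : dot3 c x = pdv (coefF r) p - 1/2 * pdu (coefG r) p := by
    rw [coefF_pdv r hr p, coefG_pdu r hr p, dot3_comm b y, dot3_comm x c]; ring
  have hcombo : dot3 a c - dot3 b b
      = -(1/2) * pdv (pdv (coefE r)) p + pdu (pdv (coefF r)) p
          - (1/2) * pdu (pdu (coefG r)) p := (brioschi_combo r hr p).symm
  have hEG : dot3 x x = coefE r p := rfl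
  have hFF : dot3 x y = coefF r p := rfl
  have hGG : dot3 y y = coefG r p := rfl
  unfold gaussK egr
  rw [hnum, key_det_identity a b c x y, hEG, hFF, hGG, hax, hbx, hby, hcy, hay, hcx,
    hcombo, hW]
  rw [div_div]
  ring_nf

/-! ### Main theorem -/

/-- Theorema Egregium: if two smooth immersed surface patches `r, r̃ : U → ℝ³` induce
the same first fundamental form coefficients `E, F, G` on `U`, then their Gaussian
curvatures agree at every point of `U`. -/
theorem theorema_egregium
    (U : Set (ℝ × ℝ)) (hU : IsOpen U)
    (r r' : ℝ × ℝ → Fin 3 → ℝ)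
    (hr : ContDiff ℝ (⊤ : ℕ∞) r) (hr' : ContDiff ℝ (⊤ : ℕ∞) r')
    (himm : ∀ p ∈ U, cross3 (pdu r p) (pdv r p) ≠ 0)
    (himm' : ∀ p ∈ U, cross3 (pdu r' p) (pdv r' p) ≠ 0)
    (hE : ∀ p ∈ U, coefE r p = coefE r' p)
    (hF : ∀ p ∈ U, coefF r p = coefF r' p)
    (hG : ∀ p ∈ U, coefG r p = coefG r' p) :
    ∀ p ∈ U, gaussK r p = gaussK r' p := by
  intro p hp
  rw [gaussK_eq_egr r hr p (himm p hp), gaussK_eq_egr r' hr' p (himm' p hp)]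
  -- first derivatives agree on U
  have hE1 : ∀ q ∈ U, ∀ w, fderiv ℝ (coefE r) q w = fderiv ℝ (coefE r') q w :=
    fun q hq w => pd_congr_of_eqOn hU hE hq w
  have hF1 : ∀ q ∈ U, ∀ w, fderiv ℝ (coefF r) q w = fderiv ℝ (coefF r') q w :=
    fun q hq w => pd_congr_of_eqOn hU hF hq w
  have hG1 : ∀ q ∈ U, ∀ w, fderiv ℝ (coefG r) q w = fderiv ℝ (coefG r') q w :=
    fun q hq w => pd_congr_of_eqOn hU hG hq w
  have hEvv : pdv (pdv (coefE r)) p = pdv (pdv (coefE r')) p :=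
    pd_congr_of_eqOn hU (fun q hq => hE1 q hq (0,1)) hp (0,1)
  have hFvu : pdu (pdv (coefF r)) p = pdu (pdv (coefF r')) p :=
    pd_congr_of_eqOn hU (fun q hq => hF1 q hq (0,1)) hp (1,0)
  have hGuu : pdu (pdu (coefG r)) p = pdu (pdu (coefG r')) p :=
    pd_congr_of_eqOn hU (fun q hq => hG1 q hq (1,0)) hp (1,0)
  unfold egr
  rw [hE p hp, hF p hp, hG p hp, hEvv, hFvu, hGuu,
    show pdu (coefE r) p = pdu (coefE r') p from hE1 p hp _,
    show pdv (coefE r) p = pdv (coefE r') p from hE1 p hp _,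
    show pdu (coefF r) p = pdu (coefF r') p from hF1 p hp _,
    show pdv (coefF r) p = pdv (coefF r') p from hF1 p hp _,
    show pdu (coefG r) p = pdu (coefG r') p from hG1 p hp _,
    show pdv (coefG r) p = pdv (coefG r') p from hG1 p hp _]

end
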